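/- arXiv:2312.11105 — 3 statements merged into one kernel-verified Lean document; each statement's English description precedes it below -/
import Mathlib

section
/- Fix an integer k ≥ 2, β ∈ (0,1], and a sequence (x_n) in [0,1). If for all s_1,...,s_{k-1} > 0 the iterated integral ∫_0^{s_1}⋯∫_0^{s_{k-1}} R_{k,β}(σ_1,...,σ_{k-1},N) dσ_{k-1}⋯dσ_1 converges to ∏_{i=1}^{k-1} s_i^2 as N → ∞, then R_{k,β}(s_1,...,s_{k-1},N) → ∏_{i=1}^{k-1} 2 s_i as N → ∞ for all s_1,...,s_{k-1} > 0. -/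
open MeasureTheory Filter
open scoped Classical

/-- Distance of a real number to the nearest integer. -/
noncomputable def nid (x : ℝ) : ℝ := |x - round x|

/-- The correlation counting statistic `R_{k,β}(s_1,…,s_{k-1},N)` with `k = m+1`:
`N^{-(k-(k-1)β)}` times the number of tuples of distinct indices `(i_1,…,i_k)` in `{1,…,N}`
with `‖x_{i_l} - x_{i_k}‖ ≤ s_l / N^β` for all `1 ≤ l ≤ k-1`. -/
noncomputable def Rcorr (x : ℕ → ℝ) (m : ℕ) (β : ℝ) (s : Fin m → ℝ) (N : ℕ) : ℝ :=
  ((Finset.univ.filter (fun i : Fin (m + 1) → Fin N =>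
      Function.Injective i ∧
        ∀ l : Fin m, nid (x (i l.castSucc) - x (i (Fin.last m))) ≤ s l / (N : ℝ) ^ β)).card : ℝ)
    / (N : ℝ) ^ ((m + 1 : ℝ) - m * β)

/-!
Write `I_N(a, b)` for the integral of `R_{k,β}(·, N)` over the box `(a, b]`. Inclusion–exclusion
over the `2^{k-1}` corners of the box turns the hypothesis into `I_N(a, b) → ∏ (b_i² - a_i²)` for
`0 < a ≤ b`. Since `R_{k,β}` is monotone in each `s_l`, `I_N(s - ε, s) ≤ ε^{k-1} R_{k,β}(s, N)` and
`ε^{k-1} R_{k,β}(s, N) ≤ I_N(s, s + ε)`, so every limit point of `R_{k,β}(s, N)` lies between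
`∏ (2 s_i - ε)` and `∏ (2 s_i + ε)`; let `ε → 0`.
-/

open Set Topology
open scoped Finset

section InclusionExclusion

variable {ι : Type*} [Fintype ι]

theorem Finset.prod_sub_eq_sum_powerset_prod_piecewise [DecidableEq ι] {R : Type*} [CommRing R]
    (f g : ι → R) :
    ∏ i, (f i - g i) =
      ∑ t ∈ (Finset.univ : Finset ι).powerset, (-1) ^ #t * ∏ i, t.piecewise g f i := by
  rw [Finset.prod_sub]
  refine Finset.sum_congr rfl fun t _ => ?_
  rw [Finset.prod_piecewise, Finset.univ_inter, mul_assoc, mul_comm (∏ i ∈ t, g i)]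

theorem indicator_univ_pi_apply_eq_prod_mul (t : ι → Set ℝ) (f : (ι → ℝ) → ℝ) (σ : ι → ℝ) :
    (univ.pi t).indicator f σ = (∏ i, (t i).indicator 1 (σ i)) * f σ := by
  by_cases hσ : σ ∈ univ.pi t
  · rw [indicator_of_mem hσ, Finset.prod_eq_one fun i _ => indicator_of_mem (hσ i trivial) _,
      one_mul]
  · obtain ⟨i, hi⟩ : ∃ i, σ i ∉ t i := by simpa [mem_univ_pi] using hσ
    rw [indicator_of_notMem hσ, Finset.prod_eq_zero (Finset.mem_univ i) (indicator_of_notMem hi _),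
      zero_mul]

theorem indicator_Ioc_eq_sub {c a b : ℝ} (hca : c ≤ a) (hab : a ≤ b) :
    (Ioc a b).indicator (1 : ℝ → ℝ) = (Icc c b).indicator 1 - (Icc c a).indicator 1 := by
  rw [← Icc_union_Ioc_eq_Icc hca hab,
    indicator_union_of_disjoint (Set.disjoint_left.2 fun _ h h' => (not_lt.2 h.2) h'.1)]
  ext y
  simp

theorem indicator_univ_pi_Ioc_eq_sum_powerset [DecidableEq ι] (f : (ι → ℝ) → ℝ) {c a b : ι → ℝ}
    (hca : c ≤ a) (hab : a ≤ b) (σ : ι → ℝ) :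
    (univ.pi fun i => Ioc (a i) (b i)).indicator f σ =
      ∑ t ∈ (Finset.univ : Finset ι).powerset,
        (-1) ^ #t * (univ.pi fun i => Icc (c i) (t.piecewise a b i)).indicator f σ := by
  simp only [indicator_univ_pi_apply_eq_prod_mul, indicator_Ioc_eq_sub (hca _) (hab _), Pi.sub_apply,
    Finset.prod_sub_eq_sum_powerset_prod_piecewise, Finset.sum_mul, mul_assoc]
  refine Finset.sum_congr rfl fun t _ => ?_
  congr 3
  ext i
  by_cases hi : i ∈ t <;> simp [hi]

theorem setIntegral_univ_pi_Ioc_eq_sum_powerset [DecidableEq ι] {μ : Measure (ι → ℝ)}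
    {f : (ι → ℝ) → ℝ} {c a b : ι → ℝ} (hca : c ≤ a) (hab : a ≤ b)
    (hf : IntegrableOn f (univ.pi fun i => Icc (c i) (b i)) μ) :
    ∫ σ in univ.pi (fun i => Ioc (a i) (b i)), f σ ∂μ =
      ∑ t ∈ (Finset.univ : Finset ι).powerset,
        (-1) ^ #t * ∫ σ in univ.pi (fun i => Icc (c i) (t.piecewise a b i)), f σ ∂μ := by
  have hmeas (d : ι → ℝ) : MeasurableSet (univ.pi fun i => Icc (c i) (d i)) :=
    .univ_pi fun _ => measurableSet_Icc
  have hint (t : Finset ι) : Integrable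
      ((univ.pi fun i => Icc (c i) (t.piecewise a b i)).indicator f) μ := by
    refine (integrable_indicator_iff (hmeas _)).2 (hf.mono_set (pi_mono fun i _ => ?_))
    exact Icc_subset_Icc_right (t.piecewise_le_of_le_of_le hab le_rfl i)
  rw [← integral_indicator (.univ_pi fun _ => measurableSet_Ioc)]
  simp_rw [indicator_univ_pi_Ioc_eq_sum_powerset f hca hab]
  rw [integral_finsetSum _ fun t _ => (hint t).const_mul _]
  simp_rw [integral_const_mul, integral_indicator (hmeas _)]

theorem tendsto_setIntegral_univ_pi_Ioc {α : Type*} {l : Filter α} {μ : Measure (ι → ℝ)}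
    {F : α → (ι → ℝ) → ℝ} {G : ι → ℝ → ℝ} {c a b : ι → ℝ} (hca : ∀ i, c i < a i) (hab : a ≤ b)
    (hF : ∀ n, IntegrableOn (F n) (univ.pi fun i => Icc (c i) (b i)) μ)
    (hlim : ∀ d : ι → ℝ, (∀ i, c i < d i) →
      Tendsto (fun n => ∫ σ in univ.pi (fun i => Icc (c i) (d i)), F n σ ∂μ) l
        (𝓝 (∏ i, G i (d i)))) :
    Tendsto (fun n => ∫ σ in univ.pi (fun i => Ioc (a i) (b i)), F n σ ∂μ) l
      (𝓝 (∏ i, (G i (b i) - G i (a i)))) := by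
  classical
  simp_rw [setIntegral_univ_pi_Ioc_eq_sum_powerset (fun i => (hca i).le) hab (hF _),
    Finset.prod_sub_eq_sum_powerset_prod_piecewise]
  refine tendsto_finsetSum _ fun t _ => (Tendsto.const_mul _ ?_)
  have hcorner : ∀ i, c i < t.piecewise a b i :=
    fun i => t.piecewise_cases a b (fun y => c i < y) (hca i) ((hca i).trans_le (hab i))
  convert hlim _ hcorner using 3 with i
  by_cases hi : i ∈ t <;> simp [hi]

end InclusionExclusion

section Squeeze

variable {α δ : Type*} {l : Filter α}

theorem tendsto_of_tendsto_lower_upper {γ : Type*} [TopologicalSpace γ] [LinearOrder γ]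
    [OrderTopology γ] {l' : Filter δ} [l'.NeBot] {u : α → γ} {lo hi : δ → γ} {L : γ}
    (hlo : Tendsto lo l' (𝓝 L)) (hhi : Tendsto hi l' (𝓝 L))
    (hlow : ∀ᶠ ε in l', ∀ c < lo ε, ∀ᶠ n in l, c < u n)
    (hup : ∀ᶠ ε in l', ∀ c, hi ε < c → ∀ᶠ n in l, u n < c) :
    Tendsto u l (𝓝 L) := by
  refine tendsto_order.2 ⟨fun c hc => ?_, fun c hc => ?_⟩
  · obtain ⟨ε, hε, h⟩ := ((hlo.eventually (lt_mem_nhds hc)).and hlow).exists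
    exact h c hε
  · obtain ⟨ε, hε, h⟩ := ((hhi.eventually (gt_mem_nhds hc)).and hup).exists
    exact h c hε

theorem eventually_lt_of_tendsto_of_le_mul {u v : α → ℝ} {k L c : ℝ} (hk : 0 < k)
    (hv : Tendsto v l (𝓝 (L * k))) (hvu : ∀ n, v n ≤ u n * k) (hc : c < L) :
    ∀ᶠ n in l, c < u n :=
  (hv.eventually (lt_mem_nhds (mul_lt_mul_of_pos_right hc hk))).mono fun n hn =>
    lt_of_mul_lt_mul_right (hn.trans_le (hvu n)) hk.le

theorem eventually_gt_of_tendsto_of_mul_le {u v : α → ℝ} {k L c : ℝ} (hk : 0 < k)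
    (hv : Tendsto v l (𝓝 (L * k))) (hvu : ∀ n, u n * k ≤ v n) (hc : L < c) :
    ∀ᶠ n in l, u n < c :=
  (hv.eventually (gt_mem_nhds (mul_lt_mul_of_pos_right hc hk))).mono fun n hn =>
    lt_of_mul_lt_mul_right ((hvu n).trans_lt hn) hk.le

end Squeeze

section MonotoneDensity

variable {ι α : Type*} [Fintype ι] {l : Filter α} {F : α → (ι → ℝ) → ℝ} {G : ι → ℝ → ℝ}
  {c : ι → ℝ}

theorem Monotone.mul_prod_sub_le_setIntegral_univ_pi_Ioc {f : (ι → ℝ) → ℝ} (hf : Monotone f)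
    {a b : ι → ℝ} (hab : a ≤ b) (hint : IntegrableOn f (univ.pi fun i => Ioc (a i) (b i))) :
    f a * ∏ i, (b i - a i) ≤ ∫ σ in univ.pi (fun i => Ioc (a i) (b i)), f σ := by
  have hfin : volume (univ.pi fun i => Ioc (a i) (b i)) ≠ ⊤ := by
    rw [Real.volume_pi_Ioc]; exact ENNReal.prod_ne_top fun _ _ => ENNReal.ofReal_ne_top
  have := setIntegral_ge_of_const_le_real (.univ_pi fun _ => measurableSet_Ioc) hfin
    (fun σ hσ => hf fun i => (hσ i trivial).1.le) hint
  rwa [measureReal_def, Real.volume_pi_Ioc_toReal hab] at this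

theorem Monotone.setIntegral_univ_pi_Ioc_le_mul_prod_sub {f : (ι → ℝ) → ℝ} (hf : Monotone f)
    {a b : ι → ℝ} (hab : a ≤ b) (hint : IntegrableOn f (univ.pi fun i => Ioc (a i) (b i))) :
    ∫ σ in univ.pi (fun i => Ioc (a i) (b i)), f σ ≤ f b * ∏ i, (b i - a i) := by
  have hfin : volume (univ.pi fun i => Ioc (a i) (b i)) ≠ ⊤ := by
    rw [Real.volume_pi_Ioc]; exact ENNReal.prod_ne_top fun _ _ => ENNReal.ofReal_ne_top
  have := setIntegral_mono_on hint (integrableOn_const hfin) (.univ_pi fun _ => measurableSet_Ioc)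
    (fun σ hσ => hf fun i => (hσ i trivial).2)
  rwa [setIntegral_const, smul_eq_mul, measureReal_def, Real.volume_pi_Ioc_toReal hab,
    mul_comm] at this

theorem prod_sub_eq_prod_slope_mul_prod_sub (G : ι → ℝ → ℝ) (a b : ι → ℝ) :
    ∏ i, (G i (b i) - G i (a i)) = (∏ i, slope (G i) (a i) (b i)) * ∏ i, (b i - a i) := by
  rw [← Finset.prod_mul_distrib]
  exact Finset.prod_congr rfl fun i _ => by
    rw [mul_comm, ← smul_eq_mul, sub_smul_slope, vsub_eq_sub]

theorem eventually_lt_apply_of_lt_prod_slope (hmono : ∀ n, Monotone (F n))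
    (hF : ∀ n (b : ι → ℝ), IntegrableOn (F n) (univ.pi fun i => Icc (c i) (b i)))
    (hlim : ∀ d : ι → ℝ, (∀ i, c i < d i) →
      Tendsto (fun n => ∫ σ in univ.pi (fun i => Icc (c i) (d i)), F n σ) l
        (𝓝 (∏ i, G i (d i))))
    {a b : ι → ℝ} (hca : ∀ i, c i < a i) (hab : ∀ i, a i < b i) {r : ℝ}
    (hr : r < ∏ i, slope (G i) (a i) (b i)) :
    ∀ᶠ n in l, r < F n b := by
  have hint (n : α) : IntegrableOn (F n) (univ.pi fun i => Ioc (a i) (b i)) :=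
    (hF n b).mono_set <| pi_mono fun i _ =>
      Ioc_subset_Icc_self.trans (Icc_subset_Icc_left (hca i).le)
  refine eventually_lt_of_tendsto_of_le_mul (Finset.prod_pos fun i _ => sub_pos.2 (hab i)) ?_
    (fun n => (hmono n).setIntegral_univ_pi_Ioc_le_mul_prod_sub (fun i => (hab i).le) (hint n)) hr
  rw [← prod_sub_eq_prod_slope_mul_prod_sub]
  exact tendsto_setIntegral_univ_pi_Ioc hca (fun i => (hab i).le) (fun n => hF n b) hlim

theorem eventually_apply_lt_of_prod_slope_lt (hmono : ∀ n, Monotone (F n))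
    (hF : ∀ n (b : ι → ℝ), IntegrableOn (F n) (univ.pi fun i => Icc (c i) (b i)))
    (hlim : ∀ d : ι → ℝ, (∀ i, c i < d i) →
      Tendsto (fun n => ∫ σ in univ.pi (fun i => Icc (c i) (d i)), F n σ) l
        (𝓝 (∏ i, G i (d i))))
    {a b : ι → ℝ} (hca : ∀ i, c i < a i) (hab : ∀ i, a i < b i) {r : ℝ}
    (hr : ∏ i, slope (G i) (a i) (b i) < r) :
    ∀ᶠ n in l, F n a < r := by
  have hint (n : α) : IntegrableOn (F n) (univ.pi fun i => Ioc (a i) (b i)) :=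
    (hF n b).mono_set <| pi_mono fun i _ =>
      Ioc_subset_Icc_self.trans (Icc_subset_Icc_left (hca i).le)
  refine eventually_gt_of_tendsto_of_mul_le (Finset.prod_pos fun i _ => sub_pos.2 (hab i)) ?_
    (fun n => (hmono n).mul_prod_sub_le_setIntegral_univ_pi_Ioc (fun i => (hab i).le) (hint n)) hr
  rw [← prod_sub_eq_prod_slope_mul_prod_sub]
  exact tendsto_setIntegral_univ_pi_Ioc hca (fun i => (hab i).le) (fun n => hF n b) hlim

theorem tendsto_apply_of_tendsto_setIntegral_univ_pi_Icc {g s : ι → ℝ} (hcs : ∀ i, c i < s i)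
    (hmono : ∀ n, Monotone (F n))
    (hF : ∀ n (b : ι → ℝ), IntegrableOn (F n) (univ.pi fun i => Icc (c i) (b i)))
    (hG : ∀ i, HasDerivAt (G i) (g i) (s i))
    (hlim : ∀ d : ι → ℝ, (∀ i, c i < d i) →
      Tendsto (fun n => ∫ σ in univ.pi (fun i => Icc (c i) (d i)), F n σ) l
        (𝓝 (∏ i, G i (d i)))) :
    Tendsto (fun n => F n s) l (𝓝 (∏ i, g i)) := by
  have hsmall : ∀ᶠ ε in 𝓝[>] (0 : ℝ), 0 < ε ∧ ∀ i, c i < s i - ε := by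
    refine (eventually_mem_nhdsWithin (a := 0) (s := Ioi 0)).and (eventually_all.2 fun i => ?_)
    filter_upwards [nhdsWithin_le_nhds (eventually_lt_nhds (sub_pos.2 (hcs i)))] with ε hε
    linarith
  refine tendsto_of_tendsto_lower_upper (l' := 𝓝[>] (0 : ℝ))
    (lo := fun ε => ∏ i, slope (G i) (s i - ε) (s i))
    (hi := fun ε => ∏ i, slope (G i) (s i) (s i + ε))
    (tendsto_finsetProd _ fun i _ => ?_) (tendsto_finsetProd _ fun i _ => ?_) ?_ ?_
  · refine ((hG i).tendsto_slope_zero_left.comp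
      (by simpa using tendsto_neg_nhdsGT_neg (a := (0 : ℝ)))).congr fun ε => ?_
    simp only [Function.comp_apply, smul_eq_mul, slope_def_field, sub_sub_cancel, ← sub_eq_add_neg]
    rw [inv_neg, neg_mul, ← mul_neg, neg_sub, div_eq_inv_mul]
  · refine (hG i).tendsto_slope_zero_right.congr fun ε => ?_
    rw [smul_eq_mul, slope_def_field, add_sub_cancel_left, div_eq_inv_mul]
  · filter_upwards [hsmall] with ε ⟨hε, hcε⟩ r hr
    exact eventually_lt_apply_of_lt_prod_slope hmono hF hlim (a := fun i => s i - ε) hcε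
      (fun i => sub_lt_self _ hε) hr
  · filter_upwards [hsmall] with ε ⟨hε, _⟩ r hr
    exact eventually_apply_lt_of_prod_slope_lt hmono hF hlim (b := fun i => s i + ε) hcs
      (fun i => lt_add_of_pos_right _ hε) hr

end MonotoneDensity

section Rcorr

variable (x : ℕ → ℝ) (m : ℕ) (β : ℝ) (N : ℕ)

theorem Rcorr_nonneg (s : Fin m → ℝ) : 0 ≤ Rcorr x m β s N := by
  unfold Rcorr; positivity

theorem monotone_Rcorr : Monotone fun s : Fin m → ℝ => Rcorr x m β s N := by
  intro s t hst
  refine div_le_div_of_nonneg_right (Nat.cast_le.2 (Finset.card_le_card ?_)) (by positivity)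
  exact Finset.monotone_filter_right _ fun i _ hi =>
    ⟨hi.1, fun l => (hi.2 l).trans (div_le_div_of_nonneg_right (hst l) (by positivity))⟩

theorem measurable_Rcorr : Measurable fun s : Fin m → ℝ => Rcorr x m β s N := by
  simp only [Rcorr, Finset.card_filter]
  push_cast
  refine (Finset.measurable_sum _ fun i _ =>
    Measurable.ite ?_ measurable_const measurable_const).div_const _
  refine measurableSet_setOfPred.2 (measurable_const.and (Measurable.forall fun l => ?_))
  exact measurableSet_setOfPred.1
    (measurableSet_le measurable_const ((measurable_pi_apply l).div_const _))

theorem integrableOn_Rcorr_univ_pi_Icc (a b : Fin m → ℝ) :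
    IntegrableOn (fun s => Rcorr x m β s N) (univ.pi fun i => Icc (a i) (b i)) := by
  refine Measure.integrableOn_of_bounded (M := Rcorr x m β b N)
    (isCompact_univ_pi fun i => isCompact_Icc).measure_lt_top.ne
    (measurable_Rcorr x m β N).aestronglyMeasurable
    (ae_restrict_of_forall_mem (.univ_pi fun _ => measurableSet_Icc) fun s hs => ?_)
  rw [Real.norm_of_nonneg (Rcorr_nonneg x m β N s)]
  exact monotone_Rcorr x m β N fun i => (hs i trivial).2

end Rcorr

theorem stmt3_general (x : ℕ → ℝ) (m : ℕ) (β : ℝ)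
    (h : ∀ s : Fin m → ℝ, (∀ i, 0 < s i) →
      Tendsto (fun N => ∫ σ in Set.univ.pi fun i => Set.Icc (0 : ℝ) (s i), Rcorr x m β σ N)
        atTop (nhds (∏ i, (s i) ^ 2))) :
    ∀ s : Fin m → ℝ, (∀ i, 0 < s i) →
      Tendsto (fun N => Rcorr x m β s N) atTop (nhds (∏ i, 2 * s i)) := by
  intro s hs
  have hsq (i : Fin m) : HasDerivAt (fun t : ℝ => t ^ 2) (2 * s i) (s i) := by
    simpa using hasDerivAt_pow 2 (s i)
  exact tendsto_apply_of_tendsto_setIntegral_univ_pi_Icc (c := 0) (G := fun _ t => t ^ 2) hs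
    (monotone_Rcorr x m β) (integrableOn_Rcorr_univ_pi_Icc x m β · 0) hsq h

/-- if the iterated integral `∫_0^{s_1}⋯∫_0^{s_{k-1}} R_{k,β}(σ,N) dσ`
converges to `∏ s_i²` for all positive `s`, then `R_{k,β}(s,N) → ∏ 2 s_i` for all positive `s`. -/
theorem stmt3 (x : ℕ → ℝ) (hx : ∀ n, x n ∈ Set.Ico (0 : ℝ) 1) (m : ℕ) (hm : 1 ≤ m)
    (β : ℝ) (hβ : 0 < β) (hβ1 : β ≤ 1)
    (h : ∀ s : Fin m → ℝ, (∀ i, 0 < s i) →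
      Tendsto (fun N => ∫ σ in Set.univ.pi fun i => Set.Icc (0 : ℝ) (s i), Rcorr x m β σ N)
        atTop (nhds (∏ i, (s i) ^ 2))) :
    ∀ s : Fin m → ℝ, (∀ i, 0 < s i) →
      Tendsto (fun N => Rcorr x m β s N) atTop (nhds (∏ i, 2 * s i)) :=
  stmt3_general x m β h
end

section
/- Let (x_n) be a sequence in [0,1), k = 2, β ∈ (0,1], and s > 0. Then ∫_0^1 G_β(s,t,N) · H_β(s,t,N) dt = N^{-(2-β)} ∑_{1 ≤ i ≠ j ≤ N} s·max(0, 1 - N^β ‖x_i - x_j‖ / s) + s·N^{-(1-β)}, for all N with s/N^β ≤ 1/2. -/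
/-!
Expanding the square, `∫ G² = N^{-2(1-β)} ∑_{i,j} ∫₀¹ 1[‖x_i - t‖ ≤ δ] 1[‖x_j - t‖ ≤ δ] dt` with
`δ = s / (2N^β)`. Each integral is the length of the intersection of two arcs of half-width `δ`
on `ℝ/ℤ`; since `δ ≤ 1/4`, up to a null set they can only overlap on one side, so the length is
`max 0 (2δ - ‖x_i - x_j‖)`. The `N` diagonal terms contribute `N · 2δ`, which is the summand
`s N^{-(1-β)}`.
-/

open MeasureTheory
open scoped Classical

/-- `G_β(s,t,N) = H_β(s,t,N)` for `k = 2`, with the points indexed from `0`. -/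
noncomputable def Gpair (x : ℕ → ℝ) (β s : ℝ) (N : ℕ) (t : ℝ) : ℝ :=
  (((Finset.range N).filter (fun i => nid (x i - t) ≤ s / (2 * (N : ℝ) ^ β))).card : ℝ)
    / (N : ℝ) ^ (1 - β)

lemma nid_eq_norm (x : ℝ) : nid x = ‖(x : UnitAddCircle)‖ := UnitAddCircle.norm_eq.symm

lemma nid_neg (x : ℝ) : nid (-x) = nid x := by
  simp only [nid_eq_norm, AddCircle.coe_neg, norm_neg]

lemma nid_add_intCast (x : ℝ) (m : ℤ) : nid (x + m) = nid x := by
  simp only [nid, round_add_intCast, Int.cast_add, add_sub_add_right_eq_sub]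

lemma nid_zero : nid 0 = 0 := by simp [nid]

lemma nid_le_abs (x : ℝ) : nid x ≤ |x| := by
  simpa [nid] using round_le x 0

lemma nid_eq_abs {x : ℝ} (hx : |x| ≤ 1 / 2) : nid x = |x| := by
  rw [nid_eq_norm, AddCircle.norm_coe_eq_abs_iff _ one_ne_zero]
  simpa using hx

lemma continuous_nid : Continuous nid := by
  simp only [funext nid_eq_norm]
  exact continuous_norm.comp (AddCircle.continuous_mk' 1)

lemma abs_le_of_nid_le {y δ : ℝ} (hy : nid y ≤ δ) (hyδ : |y| < 1 - δ) : |y| ≤ δ := by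
  rcases eq_or_ne (round y) 0 with h0 | h0
  · simpa [nid, h0] using hy
  · have hround : (1 : ℝ) ≤ |(round y : ℝ)| := by exact_mod_cast Int.one_le_abs h0
    have htri : |(round y : ℝ)| ≤ |y| + nid y := by
      rw [nid]
      simpa only [sub_sub_cancel] using abs_sub y (y - round y)
    linarith

lemma Real.volume_real_closedBall_inter_closedBall (a b δ : ℝ) :
    volume.real (Metric.closedBall a δ ∩ Metric.closedBall b δ) = max 0 (2 * δ - |a - b|) := by
  rw [Real.closedBall_eq_Icc, Real.closedBall_eq_Icc, Set.Icc_inter_Icc, Real.volume_real_Icc,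
    max_comm]
  congr 1
  rcases le_total a b with h | h
  · rw [abs_of_nonpos (sub_nonpos.2 h), max_eq_right (by linarith), min_eq_left (by linarith)]
    ring
  · rw [abs_of_nonneg (sub_nonneg.2 h), max_eq_left (by linarith), min_eq_right (by linarith)]
    ring

lemma Function.Periodic.setIntegral_Icc_comp_sub {E : Type*} [NormedAddCommGroup E]
    [NormedSpace ℝ E] {f : ℝ → E} {T : ℝ} (hf : Function.Periodic f T) (hT : 0 ≤ T) (a c : ℝ) :
    ∫ t in Set.Icc 0 T, f (a - t) = ∫ u in Set.Ioc c (c + T), f u := by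
  rw [integral_Icc_eq_integral_Ioc, ← intervalIntegral.integral_of_le hT,
    intervalIntegral.integral_comp_sub_left, sub_zero,
    ← intervalIntegral.integral_of_le (by linarith),
    ← hf.intervalIntegral_add_eq (a - T) c, sub_add_cancel]

noncomputable def arcIndicator (δ a t : ℝ) : ℝ := if nid (a - t) ≤ δ then 1 else 0

-- For `|u| < δ ≤ 1/4` we get `|u + r| < 1 - δ`, so `nid (u + r) ≤ δ` forces `|u + r| ≤ δ`;
-- only at `u = ±δ` can the two arcs also meet on the far side.
lemma ite_nid_le_mul_ite_nid_le_eq_indicator {δ r u : ℝ} (hδ : δ ≤ 1 / 4) (hr : |r| ≤ 1 / 2)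
    (hu : |u| ≤ 1 / 2) (huδ : u ≠ δ) (hu_neg_δ : u ≠ -δ) :
    (if nid u ≤ δ then (1 : ℝ) else 0) * (if nid (u + r) ≤ δ then 1 else 0)
      = (Metric.closedBall 0 δ ∩ Metric.closedBall (-r) δ).indicator (fun _ => 1) u := by
  have hiff : nid u ≤ δ ∧ nid (u + r) ≤ δ ↔ |u| ≤ δ ∧ |u + r| ≤ δ := by
    rw [nid_eq_abs hu]
    refine ⟨fun ⟨hu0, hur⟩ => ⟨hu0, abs_le_of_nid_le hur ?_⟩,
      fun ⟨hu0, hur⟩ => ⟨hu0, (nid_le_abs _).trans hur⟩⟩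
    have hlt : |u| < δ := abs_lt.2 ⟨lt_of_le_of_ne (abs_le.1 hu0).1 (Ne.symm hu_neg_δ),
      lt_of_le_of_ne (abs_le.1 hu0).2 huδ⟩
    linarith [abs_add_le u r]
  simp only [ite_zero_mul_ite_zero, mul_one, Set.indicator_apply, hiff, Set.mem_inter_iff,
    Metric.mem_closedBall, Real.dist_eq, sub_zero, sub_neg_eq_add]

lemma integral_arcIndicator_mul {δ : ℝ} (hδ : δ ≤ 1 / 4) (a b : ℝ) :
    ∫ t in Set.Icc (0 : ℝ) 1, arcIndicator δ a t * arcIndicator δ b t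
      = max 0 (2 * δ - nid (a - b)) := by
  set r := (b - a) - round (b - a)
  have hr : |r| ≤ 1 / 2 := abs_sub_round _
  have hnid : nid (a - b) = |r| := by
    rw [← nid_eq_abs hr, ← nid_add_intCast r (round (b - a)), ← nid_neg]
    congr 1
    ring
  set h : ℝ → ℝ := fun u => (if nid u ≤ δ then 1 else 0) * (if nid (u + r) ≤ δ then 1 else 0)
  have hshift : ∀ t, arcIndicator δ a t * arcIndicator δ b t = h (a - t) := fun t => by
    have hb : b - t = a - t + r + round (b - a) := by simp only [r]; ring
    rw [arcIndicator, arcIndicator, hb, nid_add_intCast]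
  have hper : Function.Periodic h 1 := fun u => by
    have nid_add_one : ∀ y, nid (y + 1) = nid y := fun y => by exact_mod_cast nid_add_intCast y 1
    simp only [h, add_right_comm u 1 r, nid_add_one]
  set S := Metric.closedBall 0 δ ∩ Metric.closedBall (-r) δ
  have hS : S ⊆ Set.Ioc (-(1 / 2)) (1 / 2) := fun u hu => by
    have := abs_le.1 (Real.dist_0_eq_abs u ▸ Metric.mem_closedBall.1 hu.1)
    constructor <;> linarith
  have hae : ∀ᵐ u, u ∈ Set.Ioc (-(1 / 2) : ℝ) (1 / 2) → h u = S.indicator (fun _ => 1) u := by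
    filter_upwards [(Set.toFinite {δ, -δ}).countable.ae_notMem volume] with u hne hu
    simp only [Set.mem_insert_iff, Set.mem_singleton_iff, not_or] at hne
    exact ite_nid_le_mul_ite_nid_le_eq_indicator hδ hr (abs_le.2 ⟨hu.1.le, hu.2⟩) hne.1 hne.2
  rw [integral_congr_ae (ae_of_all _ hshift),
    hper.setIntegral_Icc_comp_sub zero_le_one a (-(1 / 2)),
    show -(1 / 2) + 1 = (1 / 2 : ℝ) by norm_num, setIntegral_congr_ae measurableSet_Ioc hae,
    setIntegral_indicator (measurableSet_closedBall.inter measurableSet_closedBall),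
    Set.inter_eq_right.2 hS, setIntegral_const, smul_eq_mul, mul_one,
    Real.volume_real_closedBall_inter_closedBall, zero_sub, neg_neg, hnid]

lemma measurable_arcIndicator (δ a : ℝ) : Measurable (arcIndicator δ a) :=
  Measurable.ite
    (measurableSet_le (continuous_nid.measurable.comp (measurable_const.sub measurable_id))
      measurable_const)
    measurable_const measurable_const

lemma integrableOn_arcIndicator_mul (δ a b : ℝ) :
    IntegrableOn (fun t => arcIndicator δ a t * arcIndicator δ b t) (Set.Icc 0 1) := by
  refine Measure.integrableOn_of_bounded (M := 1) measure_Icc_lt_top.ne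
    ((measurable_arcIndicator δ a).mul (measurable_arcIndicator δ b)).aestronglyMeasurable
    (ae_of_all _ fun t => ?_)
  simp only [arcIndicator]
  split_ifs <;> norm_num

lemma Gpair_eq_sum_arcIndicator (x : ℕ → ℝ) (β s : ℝ) (N : ℕ) (t : ℝ) :
    Gpair x β s N t
      = (∑ i ∈ Finset.range N, arcIndicator (s / (2 * (N : ℝ) ^ β)) (x i) t)
          / (N : ℝ) ^ (1 - β) := by
  rw [Gpair, Finset.card_filter]
  push_cast
  rfl

lemma max_zero_sub_eq_mul_max_zero_one_sub {c s : ℝ} (hc : 0 < c) (hs : 0 < s) (d : ℝ) :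
    max 0 (s / c - d) = s * max 0 (1 - c * d / s) / c := by
  rw [mul_max_of_nonneg _ _ hs.le, ← max_div_div_right hc.le]
  congr 1
  · simp
  · field_simp

lemma sum_product_max_zero_sub_nid {ι : Type*} [DecidableEq ι] (I : Finset ι) (x : ι → ℝ)
    {c s : ℝ} (hc : 0 < c) (hs : 0 < s) :
    ∑ p ∈ I ×ˢ I, max 0 (s / c - nid (x p.1 - x p.2))
      = (∑ p ∈ (I ×ˢ I).filter (fun p => p.1 ≠ p.2),
          s * max 0 (1 - c * nid (x p.1 - x p.2) / s)) / c + I.card * (s / c) := by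
  rw [← Finset.sum_filter_add_sum_filter_not _ (fun p : ι × ι => p.1 ≠ p.2), Finset.sum_div]
  congr 1
  · exact Finset.sum_congr rfl fun p _ => max_zero_sub_eq_mul_max_zero_one_sub hc hs _
  · have hdiag : (I ×ˢ I).filter (fun p => ¬p.1 ≠ p.2) = I.diag := by ext; simp +contextual
    simp only [hdiag, Finset.sum_diag, sub_self, nid_zero, sub_zero,
      max_eq_right (div_pos hs hc).le, Finset.sum_const, nsmul_eq_mul]

theorem stmt7_general (x : ℕ → ℝ)
    (β : ℝ) (s : ℝ) (hs : 0 < s)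
    (N : ℕ) (hN : 1 ≤ N) (hsN : s / (N : ℝ) ^ β ≤ 1 / 2) :
    (∫ t in Set.Icc (0 : ℝ) 1, Gpair x β s N t * Gpair x β s N t)
      = (∑ p ∈ (Finset.range N ×ˢ Finset.range N).filter (fun p => p.1 ≠ p.2),
          s * max 0 (1 - (N : ℝ) ^ β * nid (x p.1 - x p.2) / s)) / (N : ℝ) ^ (2 - β)
        + s / (N : ℝ) ^ (1 - β) := by
  have hN0 : (0 : ℝ) < N := by exact_mod_cast hN
  have hNβ : (0 : ℝ) < (N : ℝ) ^ β := Real.rpow_pos_of_pos hN0 β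
  set δ := s / (2 * (N : ℝ) ^ β)
  have h2δ : 2 * δ = s / (N : ℝ) ^ β := by simp only [δ]; field_simp
  have hδ : δ ≤ 1 / 4 := by linarith
  simp_rw [Gpair_eq_sum_arcIndicator, div_mul_div_comm, Finset.sum_mul_sum, ← Finset.sum_product']
  rw [integral_div, integral_finsetSum _ fun p _ => integrableOn_arcIndicator_mul δ _ _]
  simp only [integral_arcIndicator_mul hδ, h2δ]
  rw [sum_product_max_zero_sub_nid _ _ hNβ hs, Finset.card_range, Real.rpow_sub hN0,
    Real.rpow_sub hN0, Real.rpow_one, Real.rpow_two]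
  field_simp

/-- for `k = 2`, `β ∈ (0,1]`, `s > 0` and `N ≥ 1` with `s/N^β ≤ 1/2`,
`∫_0^1 G_β(s,t,N)·H_β(s,t,N) dt
  = N^{-(2-β)} ∑_{i ≠ j ≤ N} s·max(0, 1 - N^β‖x_i - x_j‖/s) + s·N^{-(1-β)}`. -/
theorem stmt7 (x : ℕ → ℝ) (hx : ∀ n, x n ∈ Set.Ico (0 : ℝ) 1)
    (β : ℝ) (hβ : 0 < β) (hβ1 : β ≤ 1) (s : ℝ) (hs : 0 < s)
    (N : ℕ) (hN : 1 ≤ N) (hsN : s / (N : ℝ) ^ β ≤ 1 / 2) :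
    (∫ t in Set.Icc (0 : ℝ) 1, Gpair x β s N t * Gpair x β s N t)
      = (∑ p ∈ (Finset.range N ×ˢ Finset.range N).filter (fun p => p.1 ≠ p.2),
          s * max 0 (1 - (N : ℝ) ^ β * nid (x p.1 - x p.2) / s)) / (N : ℝ) ^ (2 - β)
        + s / (N : ℝ) ^ (1 - β) :=
  stmt7_general x β s hs N hN hsN
end

section
/- Let x = (x_n) be a sequence in [0,1] whose discrepancy satisfies D_N(x) = o(N^{-(1-ε)}) for some 0 < ε < 1. Then for every integer k ≥ 2 and every β with 0 < β ≤ 1 - ε, the sequence has (k,β)-Poissonian box correlations: for all s_1,...,s_{k-1} > 0, R_{k,β}(s_1,...,s_{k-1},N) → ∏_{l=1}^{k-1} 2 s_l as N → ∞. -/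
open MeasureTheory Filter Asymptotics
open scoped Classical

/-- The (extreme) discrepancy of the first `N` points of a sequence:
`sup` over intervals `[a,b) ⊆ [0,1)` of `|#{i ≤ N : x_i ∈ [a,b)}/N - (b-a)|`. -/
noncomputable def disc (x : ℕ → ℝ) (N : ℕ) : ℝ :=
  sSup {d : ℝ | ∃ a b : ℝ, 0 ≤ a ∧ a ≤ b ∧ b ≤ 1 ∧
    d = |(((Finset.range N).filter (fun i => x i ∈ Set.Ico a b)).card : ℝ) / N - (b - a)|}

/-!
Write `A_l(j)` for the number of `v < N` with `‖x_v - x_j‖ ≤ s_l / N^β`. For `t < 1/2` the window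
`{y ∈ [0,1] : ‖y - c‖ ≤ t}` is a closed interval or the complement of an open interval, so the
discrepancy bound gives `A_l(j) = 2 s_l N^(1-β) + O(N D_N)`. Sorting tuples by their last entry,
those satisfying all constraints number `∑_j ∏_l A_l(j) = N ∏_l 2 s_l N^(1-β) + O(N · N D_N ·
N^((1-β)(k-2)))`, while those with a repeated index number `O(N · N^((1-β)(k-2)))`, because a
repetition removes one free index. Normalised by `N^(k-(k-1)β)`, the two errors are `O(N^β D_N)` and
`O(N^(β-1))`, and both tend to `0` since `β ≤ 1 - ε < 1`.
-/

open Finset Topology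

section Discrepancy

variable {x : ℕ → ℝ}

lemma abs_card_filter_div_sub_le_disc (x : ℕ → ℝ) (N : ℕ) {a b : ℝ} (ha : 0 ≤ a) (hab : a ≤ b)
    (hb : b ≤ 1) :
    |(#{i ∈ range N | x i ∈ Set.Ico a b} : ℝ) / N - (b - a)| ≤ disc x N := by
  refine le_csSup ⟨1, ?_⟩ ⟨a, b, ha, hab, hb, rfl⟩
  rintro _ ⟨a, b, ha, hab, hb, rfl⟩
  have h0 : 0 ≤ (#{i ∈ range N | x i ∈ Set.Ico a b} : ℝ) / N := by positivity
  have h1 : (#{i ∈ range N | x i ∈ Set.Ico a b} : ℝ) / N ≤ 1 :=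
    div_le_one_of_le₀ (by exact_mod_cast (card_filter_le _ _).trans (card_range N).le)
      (Nat.cast_nonneg N)
  rw [abs_le]
  constructor <;> linarith

lemma disc_nonneg (x : ℕ → ℝ) (N : ℕ) : 0 ≤ disc x N :=
  (abs_nonneg _).trans (abs_card_filter_div_sub_le_disc x N le_rfl le_rfl zero_le_one)

lemma abs_card_filter_Ico_sub_le (x : ℕ → ℝ) (N : ℕ) {a b : ℝ} (ha : 0 ≤ a) (hab : a ≤ b)
    (hb : b ≤ 1) :
    |(#{i ∈ range N | x i ∈ Set.Ico a b} : ℝ) - N * (b - a)| ≤ N * disc x N := by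
  rcases N.eq_zero_or_pos with rfl | hN
  · simp
  have hN' : (0 : ℝ) < N := by exact_mod_cast hN
  calc |(#{i ∈ range N | x i ∈ Set.Ico a b} : ℝ) - N * (b - a)|
      = |N * ((#{i ∈ range N | x i ∈ Set.Ico a b} : ℝ) / N - (b - a))| := by
        congr 1; field_simp
    _ = N * |(#{i ∈ range N | x i ∈ Set.Ico a b} : ℝ) / N - (b - a)| := by
        rw [abs_mul, abs_of_pos hN']
    _ ≤ N * disc x N := by gcongr; exact abs_card_filter_div_sub_le_disc x N ha hab hb

lemma abs_card_lt_sub_le (hx : ∀ n, x n ∈ Set.Icc (0 : ℝ) 1) (N : ℕ) {u : ℝ} (hu0 : 0 ≤ u)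
    (hu1 : u ≤ 1) :
    |(#{i ∈ range N | x i < u} : ℝ) - N * u| ≤ N * disc x N := by
  have hIco : {i ∈ range N | x i < u} = {i ∈ range N | x i ∈ Set.Ico 0 u} :=
    filter_congr fun i _ => by simp [(hx i).1]
  simpa [hIco] using abs_card_filter_Ico_sub_le x N le_rfl hu0 hu1

lemma abs_card_le_sub_le (hx : ∀ n, x n ∈ Set.Icc (0 : ℝ) 1) (N : ℕ) {u : ℝ} (hu0 : 0 ≤ u)
    (hu1 : u ≤ 1) :
    |(#{i ∈ range N | x i ≤ u} : ℝ) - N * u| ≤ N * disc x N := by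
  have hlt_le : (#{i ∈ range N | x i < u} : ℝ) ≤ #{i ∈ range N | x i ≤ u} := by
    exact_mod_cast card_le_card fun i hi => by
      simp only [mem_filter] at hi ⊢; exact ⟨hi.1, hi.2.le⟩
  have hlower := (abs_le.mp (abs_card_lt_sub_le hx N hu0 hu1)).1
  have hupper : (#{i ∈ range N | x i ≤ u} : ℝ) ≤ N * u + N * disc x N := by
    rcases hu1.lt_or_eq with hu1 | rfl
    · -- approximate `[0, u]` from outside by `[0, v)`, `v ↓ u`
      refine ge_of_tendsto (x := 𝓝[>] u) (f := fun v => N * v + N * disc x N)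
        (tendsto_nhdsWithin_of_tendsto_nhds (by fun_prop : Continuous _).continuousAt.tendsto) ?_
      filter_upwards [Ioo_mem_nhdsGT hu1] with v hv
      calc (#{i ∈ range N | x i ≤ u} : ℝ) ≤ #{i ∈ range N | x i < v} := by
            exact_mod_cast card_le_card fun i hi => by
              simp only [mem_filter] at hi ⊢; exact ⟨hi.1, hi.2.trans_lt hv.1⟩
        _ ≤ N * v + N * disc x N := by
            linarith [(abs_le.mp (abs_card_lt_sub_le hx N (hu0.trans hv.1.le) hv.2.le)).2]
    · have : (#{i ∈ range N | x i ≤ 1} : ℝ) ≤ N := by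
        exact_mod_cast (card_filter_le _ _).trans (card_range N).le
      nlinarith [disc_nonneg x N]
  rw [abs_le]
  constructor <;> linarith

lemma card_filter_add_card_filter {ι : Type*} {s : Finset ι} {p q r : ι → Prop} [DecidablePred p]
    [DecidablePred q] [DecidablePred r] (hdisj : ∀ i ∈ s, p i → ¬ q i)
    (hunion : ∀ i ∈ s, p i ∨ q i ↔ r i) :
    #{i ∈ s | p i} + #{i ∈ s | q i} = #{i ∈ s | r i} := by
  rw [← card_union_of_disjoint (disjoint_filter.2 hdisj), ← filter_or]
  exact congrArg card (filter_congr hunion)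

lemma abs_card_mem_Icc_sub_le (hx : ∀ n, x n ∈ Set.Icc (0 : ℝ) 1) (N : ℕ) {a b : ℝ} (ha : 0 ≤ a)
    (hab : a ≤ b) (hb : b ≤ 1) :
    |(#{i ∈ range N | x i ∈ Set.Icc a b} : ℝ) - N * (b - a)| ≤ 2 * (N * disc x N) := by
  have hsplit : #{i ∈ range N | x i ∈ Set.Icc a b} + #{i ∈ range N | x i < a} =
      #{i ∈ range N | x i ≤ b} :=
    card_filter_add_card_filter (fun i _ h h' => h.1.not_gt h') fun i _ => by
      constructor
      · rintro (h | h) <;> [exact h.2; linarith]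
      · intro h; by_cases h' : x i < a <;> [exact Or.inr h'; exact Or.inl ⟨not_lt.1 h', h⟩]
  have hcard : (#{i ∈ range N | x i ∈ Set.Icc a b} : ℝ) =
      #{i ∈ range N | x i ≤ b} - #{i ∈ range N | x i < a} := by
    rw [← hsplit]; push_cast; ring
  calc |(#{i ∈ range N | x i ∈ Set.Icc a b} : ℝ) - N * (b - a)|
      = |((#{i ∈ range N | x i ≤ b} : ℝ) - N * b) -
          ((#{i ∈ range N | x i < a} : ℝ) - N * a)| := by
        rw [hcard]; ring_nf
    _ ≤ _ := abs_sub _ _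
    _ ≤ 2 * (N * disc x N) := by
        linarith [abs_card_le_sub_le hx N (ha.trans hab) hb,
          abs_card_lt_sub_le hx N ha (hab.trans hb)]

lemma abs_card_not_mem_Ioo_sub_le (hx : ∀ n, x n ∈ Set.Icc (0 : ℝ) 1) (N : ℕ) {p q : ℝ}
    (hp : 0 ≤ p) (hpq : p < q) (hq : q ≤ 1) :
    |(#{i ∈ range N | x i ∉ Set.Ioo p q} : ℝ) - N * (1 - (q - p))| ≤ 2 * (N * disc x N) := by
  have hsplit : #{i ∈ range N | x i ∈ Set.Ioo p q} + #{i ∈ range N | x i ≤ p} =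
      #{i ∈ range N | x i < q} :=
    card_filter_add_card_filter (fun i _ h h' => h.1.not_ge h') fun i _ => by
      constructor
      · rintro (h | h) <;> [exact h.2; linarith]
      · intro h; by_cases h' : x i ≤ p <;> [exact Or.inr h'; exact Or.inl ⟨not_le.1 h', h⟩]
  have hcompl : (#{i ∈ range N | x i ∈ Set.Ioo p q} : ℝ) +
      #{i ∈ range N | x i ∉ Set.Ioo p q} = N := by
    exact_mod_cast (card_filter_add_card_filter_not (s := range N) _).trans (card_range N)
  have hcard : (#{i ∈ range N | x i ∉ Set.Ioo p q} : ℝ) =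
      N - (#{i ∈ range N | x i < q} - #{i ∈ range N | x i ≤ p}) := by
    rw [← hsplit]; push_cast; linarith
  calc |(#{i ∈ range N | x i ∉ Set.Ioo p q} : ℝ) - N * (1 - (q - p))|
      = |((#{i ∈ range N | x i ≤ p} : ℝ) - N * p) -
          ((#{i ∈ range N | x i < q} : ℝ) - N * q)| := by
        rw [hcard]; ring_nf
    _ ≤ _ := abs_sub _ _
    _ ≤ 2 * (N * disc x N) := by
        linarith [abs_card_le_sub_le hx N hp (hpq.le.trans hq),
          abs_card_lt_sub_le hx N (hp.trans hpq.le) hq]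

end Discrepancy

lemma nid_le_iff_exists_int {z t : ℝ} : nid z ≤ t ↔ ∃ k : ℤ, |z - k| ≤ t :=
  ⟨fun h => ⟨round z, h⟩, fun ⟨k, hk⟩ => (round_le z k).trans hk⟩

lemma nid_sub_le_iff_mem_Icc {y c t : ℝ} (hy : y ∈ Set.Icc (0 : ℝ) 1) (htc : t < c)
    (hct : c + t < 1) : nid (y - c) ≤ t ↔ y ∈ Set.Icc (c - t) (c + t) := by
  rw [nid_le_iff_exists_int]
  constructor
  · rintro ⟨k, hk⟩
    rw [abs_le] at hk
    rcases lt_trichotomy k 0 with hk0 | rfl | hk0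
    · have : (k : ℝ) ≤ -1 := by exact_mod_cast Int.le_sub_one_of_lt hk0
      linarith [hy.1]
    · simp only [Int.cast_zero, sub_zero] at hk
      constructor <;> linarith
    · have : (1 : ℝ) ≤ k := by exact_mod_cast hk0
      linarith [hy.2]
  · rintro ⟨h₁, h₂⟩
    exact ⟨0, by rw [Int.cast_zero, sub_zero, abs_le]; constructor <;> linarith⟩

lemma nid_sub_le_iff_not_mem_Ioo {y c t : ℝ} (n : ℤ) (hy : y ∈ Set.Icc (0 : ℝ) 1)
    (h₀ : 0 ≤ c + n + t) (h₁ : c + n + 1 - t ≤ 1) :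
    nid (y - c) ≤ t ↔ y ∉ Set.Ioo (c + n + t) (c + n + 1 - t) := by
  rw [nid_le_iff_exists_int, Set.mem_Ioo, not_and_or, not_lt, not_lt]
  constructor
  · rintro ⟨k, hk⟩
    rw [abs_le] at hk
    rcases le_or_gt k n with hkn | hkn
    · have : (k : ℝ) ≤ n := by exact_mod_cast hkn
      left; linarith
    · have : (n : ℝ) + 1 ≤ k := by exact_mod_cast hkn
      right; linarith
  · rintro (h | h)
    · exact ⟨n, by rw [abs_le]; constructor <;> linarith [hy.1]⟩
    · exact ⟨n + 1, by push_cast; rw [abs_le]; constructor <;> linarith [hy.2]⟩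

lemma abs_card_nid_sub_le {x : ℕ → ℝ} (hx : ∀ n, x n ∈ Set.Icc (0 : ℝ) 1) (N : ℕ) {c t : ℝ}
    (hc : c ∈ Set.Icc (0 : ℝ) 1) (ht0 : 0 ≤ t) (ht : t < 1 / 2) :
    |(#{i ∈ range N | nid (x i - c) ≤ t} : ℝ) - N * (2 * t)| ≤ 2 * (N * disc x N) := by
  obtain ⟨hc0, hc1⟩ := hc
  -- the window wraps around `0`, wraps around `1`, or stays inside `[0, 1]`
  by_cases hlow : c ≤ t
  · rw [filter_congr fun i _ => nid_sub_le_iff_not_mem_Ioo 0 (hx i) (by simp; linarith)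
      (by simp; linarith)]
    convert abs_card_not_mem_Ioo_sub_le hx N (p := c + (0 : ℤ) + t) (q := c + (0 : ℤ) + 1 - t)
      (by simp; linarith) (by linarith) (by simp; linarith) using 3
    push_cast; ring
  by_cases hhigh : 1 - t ≤ c
  · rw [filter_congr fun i _ => nid_sub_le_iff_not_mem_Ioo (-1) (hx i) (by simp; linarith)
      (by simp; linarith)]
    convert abs_card_not_mem_Ioo_sub_le hx N (p := c + (-1 : ℤ) + t) (q := c + (-1 : ℤ) + 1 - t)
      (by simp; linarith) (by linarith) (by simp; linarith) using 3
    push_cast; ring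
  rw [filter_congr fun i _ => nid_sub_le_iff_mem_Icc (hx i) (by linarith) (by linarith)]
  convert abs_card_mem_Icc_sub_le hx N (a := c - t) (b := c + t) (by linarith) (by linarith)
    (by linarith) using 3
  ring

lemma abs_prod_sub_prod_le {ι : Type*} (s : Finset ι) {f g : ι → ℝ} {e B : ℝ} (hB : 0 ≤ B)
    (hf : ∀ i ∈ s, |f i| ≤ B) (hg : ∀ i ∈ s, |g i| ≤ B) (hfg : ∀ i ∈ s, |f i - g i| ≤ e) :
    |∏ i ∈ s, f i - ∏ i ∈ s, g i| ≤ #s * e * B ^ (#s - 1) := by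
  induction s using Finset.cons_induction with
  | empty => simp
  | cons a s ha ih =>
    have ih := ih (fun i hi => hf i (mem_cons_of_mem hi)) (fun i hi => hg i (mem_cons_of_mem hi))
      fun i hi => hfg i (mem_cons_of_mem hi)
    have hgs : |∏ i ∈ s, g i| ≤ B ^ #s := by
      rw [abs_prod]
      exact (prod_le_prod (fun _ _ => abs_nonneg _) fun i hi => hg i (mem_cons_of_mem hi)).trans_eq
        (prod_const B)
    have hBs : B * (#s * e * B ^ (#s - 1)) = #s * e * B ^ #s := by
      rcases s.eq_empty_or_nonempty with rfl | hs
      · simp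
      · rw [← mul_pow_sub_one (card_ne_zero.2 hs) B]; ring
    rw [prod_cons, prod_cons, card_cons, Nat.add_sub_cancel]
    calc |f a * ∏ i ∈ s, f i - g a * ∏ i ∈ s, g i|
        = |f a * (∏ i ∈ s, f i - ∏ i ∈ s, g i) + (f a - g a) * ∏ i ∈ s, g i| := by ring_nf
      _ ≤ |f a| * |∏ i ∈ s, f i - ∏ i ∈ s, g i| + |f a - g a| * |∏ i ∈ s, g i| := by
          rw [← abs_mul, ← abs_mul]; exact abs_add_le _ _
      _ ≤ B * (#s * e * B ^ (#s - 1)) + e * B ^ #s := by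
          gcongr
          · exact hf a (mem_cons_self a s)
          · exact (abs_nonneg _).trans (hfg a (mem_cons_self a s))
          · exact hfg a (mem_cons_self a s)
      _ = ↑(#s + 1) * e * B ^ #s := by rw [hBs]; push_cast; ring

lemma card_le_prod_erase_of_injOn_restrict {α ι : Type*} [Fintype ι] [DecidableEq ι]
    (T : ι → Finset α) (c : ι) {S : Finset (ι → α)} (hS : S ⊆ Fintype.piFinset T)
    (hinj : Set.InjOn (fun (f : ι → α) (l : {l // l ≠ c}) => f l) S) :
    #S ≤ ∏ l ∈ univ.erase c, #(T l) := by
  calc #S ≤ #(Fintype.piFinset fun l : {l // l ≠ c} => T l) :=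
        card_le_card_of_injOn _ (fun f hf => Fintype.mem_piFinset.2 fun l =>
          Fintype.mem_piFinset.1 (hS hf) l) hinj
    _ = ∏ l ∈ univ.erase c, #(T l) := by
        rw [Fintype.card_piFinset]
        exact (prod_subtype (univ.erase c) (fun l => by simp) fun l => #(T l)).symm

section Tuples

variable {α : Type*} [Fintype α] [DecidableEq α] {m : ℕ}

lemma card_filter_eq_sum_card_filter_snoc (R : (Fin (m + 1) → α) → Prop) [DecidablePred R] :
    #{i | R i} = ∑ j, #{f : Fin m → α | R (Fin.snoc f j)} := by
  rw [card_eq_sum_card_fiberwise (f := fun i => i (Fin.last m)) (t := univ)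
    fun _ _ => mem_univ _]
  refine sum_congr rfl fun j _ => card_nbij' Fin.init (fun f => Fin.snoc f j) ?_ ?_ ?_ ?_
  · intro i hi
    simp only [mem_coe, mem_filter, mem_univ, true_and] at hi ⊢
    rw [← hi.2, Fin.snoc_init_self]
    exact hi.1
  · intro f hf
    simp only [mem_coe, mem_filter, mem_univ, true_and] at hf ⊢
    exact ⟨hf, Fin.snoc_last _ _⟩
  · intro i hi
    simp only [mem_coe, mem_filter, mem_univ, true_and] at hi
    simp only [← hi.2, Fin.snoc_init_self]
  · intro f _
    exact Fin.init_snoc _ _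

def anchoredTuples (P : Fin m → α → α → Prop) [∀ l, DecidableRel (P l)] :
    Finset (Fin (m + 1) → α) :=
  {i | ∀ l, P l (i l.castSucc) (i (Fin.last m))}

variable (P : Fin m → α → α → Prop) [∀ l, DecidableRel (P l)]

lemma card_anchoredTuples : #(anchoredTuples P) = ∑ j, ∏ l, #{v | P l v j} := by
  rw [anchoredTuples, card_filter_eq_sum_card_filter_snoc]
  refine sum_congr rfl fun j _ => ?_
  rw [← Fintype.card_piFinset]
  congr 1
  ext f
  simp [Fintype.mem_piFinset]

lemma abs_card_anchoredTuples_sub_le {a : Fin m → ℝ} {e B : ℝ} (hB : 0 ≤ B)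
    (hPa : ∀ l j, |(#{v | P l v j} : ℝ) - a l| ≤ e) (hPB : ∀ l j, (#{v | P l v j} : ℝ) ≤ B)
    (haB : ∀ l, |a l| ≤ B) :
    |(#(anchoredTuples P) : ℝ) - Fintype.card α * ∏ l, a l| ≤
      Fintype.card α * (m * e * B ^ (m - 1)) := by
  rw [card_anchoredTuples]
  push_cast
  calc |∑ j, ∏ l, (#{v | P l v j} : ℝ) - Fintype.card α * ∏ l, a l|
      = |∑ j, (∏ l, (#{v | P l v j} : ℝ) - ∏ l, a l)| := by simp [sum_sub_distrib]
    _ ≤ ∑ j, |∏ l, (#{v | P l v j} : ℝ) - ∏ l, a l| := abs_sum_le_sum_abs _ _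
    _ ≤ ∑ _j : α, m * e * B ^ (m - 1) := sum_le_sum fun j _ => by
        simpa using abs_prod_sub_prod_le univ hB
          (fun l _ => (Nat.abs_cast _).trans_le (hPB l j)) (fun l _ => haB l) fun l _ => hPa l j
    _ = Fintype.card α * (m * e * B ^ (m - 1)) := by simp

lemma card_filter_anchoredTuples_castSucc_eq_le (c : Fin m) (d : Fin (m + 1))
    (hd : d ≠ c.castSucc) :
    #{i ∈ anchoredTuples P | i c.castSucc = i d} ≤ ∑ j, ∏ l ∈ univ.erase c, #{v | P l v j} := by
  rw [anchoredTuples, filter_filter, card_filter_eq_sum_card_filter_snoc]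
  refine sum_le_sum fun j _ => card_le_prod_erase_of_injOn_restrict _ c (fun f hf => ?_) ?_
  · simp only [mem_filter, mem_univ, true_and, Fin.snoc_castSucc, Fin.snoc_last] at hf
    exact Fintype.mem_piFinset.2 fun l => by simpa using hf.1 l
  · -- the entry at `c` is pinned to the entry at `d`, which is known off `c`
    intro f hf g hg hfg
    simp only [mem_coe, mem_filter, mem_univ, true_and, Fin.snoc_castSucc, Fin.snoc_last]
      at hf hg
    have hoff : ∀ l, l ≠ c → f l = g l := fun l hl => congrFun hfg ⟨l, hl⟩
    have hd' : Fin.snoc (α := fun _ => α) f j d = Fin.snoc (α := fun _ => α) g j d := by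
      induction d using Fin.lastCases with
      | last => simp
      | cast d => simpa using hoff d (fun h => hd (h ▸ rfl))
    funext l
    by_cases hl : l = c
    · rw [hl, hf.2, hg.2, hd']
    · exact hoff l hl

lemma card_filter_anchoredTuples_not_injective_le {B : ℝ} (hB0 : 0 ≤ B)
    (hB : ∀ l j, (#{v | P l v j} : ℝ) ≤ B) :
    (#{i ∈ anchoredTuples P | ¬ i.Injective} : ℝ) ≤
      m * (m + 1) * (Fintype.card α * B ^ (m - 1)) := by
  set pairs := univ.filter fun p : Fin m × Fin (m + 1) => p.2 ≠ p.1.castSucc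
  have hsub : {i ∈ anchoredTuples P | ¬ i.Injective} ⊆
      pairs.biUnion fun p => {i ∈ anchoredTuples P | i p.1.castSucc = i p.2} := by
    intro i hi
    rw [mem_filter, Function.not_injective_iff] at hi
    obtain ⟨hP, a, b, hab, hne⟩ := hi
    simp only [mem_biUnion, mem_filter, mem_univ, true_and, pairs]
    -- one of two distinct indices is not the last one
    rcases Fin.eq_castSucc_or_eq_last a with ⟨c, rfl⟩ | rfl
    · exact ⟨(c, b), hne.symm, hP, hab⟩
    · obtain ⟨c, rfl⟩ := Fin.exists_castSucc_eq.2 hne.symm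
      exact ⟨(c, Fin.last m), (Fin.castSucc_lt_last c).ne', hP, hab.symm⟩
  have hpair : ∀ p ∈ pairs,
      (#{i ∈ anchoredTuples P | i p.1.castSucc = i p.2} : ℝ) ≤ Fintype.card α * B ^ (m - 1) := by
    intro p hp
    calc _ ≤ ∑ j : α, ∏ l ∈ univ.erase p.1, (#{v | P l v j} : ℝ) := by
          exact_mod_cast card_filter_anchoredTuples_castSucc_eq_le P p.1 p.2 (mem_filter.1 hp).2
      _ ≤ ∑ _j : α, ∏ _l ∈ univ.erase p.1, B :=
          sum_le_sum fun j _ => prod_le_prod (fun _ _ => Nat.cast_nonneg _) fun l _ => hB l j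
      _ = Fintype.card α * B ^ (m - 1) := by simp [card_erase_of_mem]
  have hpairs : (#pairs : ℝ) ≤ m * (m + 1) := by
    exact_mod_cast (card_filter_le _ _).trans (by simp)
  calc _ ≤ ∑ p ∈ pairs, (#{i ∈ anchoredTuples P | i p.1.castSucc = i p.2} : ℝ) := by
        exact_mod_cast (card_le_card hsub).trans card_biUnion_le
    _ ≤ #pairs * (Fintype.card α * B ^ (m - 1)) :=
        (sum_le_card_nsmul _ _ _ hpair).trans_eq (nsmul_eq_mul _ _)
    _ ≤ m * (m + 1) * (Fintype.card α * B ^ (m - 1)) := by gcongr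

end Tuples

lemma card_filter_fin_eq_card_filter_range (N : ℕ) (p : ℕ → Prop) [DecidablePred p] :
    #{v : Fin N | p v} = #{n ∈ range N | p n} := by
  rw [← Nat.Iio_eq_range, ← Fin.map_valEmbedding_univ, filter_map, card_map]
  rfl

lemma abs_card_correlation_sub_le {x : ℕ → ℝ} (hx : ∀ n, x n ∈ Set.Icc (0 : ℝ) 1) (N : ℕ)
    {m : ℕ} (t : Fin m → ℝ) (ht0 : ∀ l, 0 ≤ t l) (ht : ∀ l, t l < 1 / 2) :
    |(#{i : Fin (m + 1) → Fin N | Function.Injective i ∧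
        ∀ l, nid (x (i l.castSucc) - x (i (Fin.last m))) ≤ t l} : ℝ) - N * ∏ l, N * (2 * t l)| ≤
      m * N * (N * ∑ l, 2 * t l + 2 * (N * disc x N)) ^ (m - 1) *
        (2 * (N * disc x N) + (m + 1)) := by
  set P : Fin m → Fin N → Fin N → Prop := fun l v j => nid (x v - x j) ≤ t l
  set e := 2 * (N * disc x N)
  set B := N * ∑ l, 2 * t l + e
  have he : 0 ≤ e := by have := disc_nonneg x N; positivity
  have hsum : ∀ l, (N : ℝ) * (2 * t l) ≤ N * ∑ l, 2 * t l := fun l => by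
    gcongr
    exact single_le_sum (f := fun l => 2 * t l) (fun l _ => by linarith [ht0 l]) (mem_univ l)
  have hB : 0 ≤ B := add_nonneg (mul_nonneg (Nat.cast_nonneg N)
    (sum_nonneg fun l _ => by linarith [ht0 l])) he
  have hA : ∀ l j, |(#{v | P l v j} : ℝ) - N * (2 * t l)| ≤ e := fun l j => by
    rw [card_filter_fin_eq_card_filter_range N fun n => nid (x n - x j) ≤ t l]
    exact abs_card_nid_sub_le hx N (hx j) (ht0 l) (ht l)
  have hAB : ∀ l j, (#{v | P l v j} : ℝ) ≤ B := fun l j => by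
    linarith [(abs_le.1 (hA l j)).2, hsum l]
  have hall := abs_card_anchoredTuples_sub_le P hB hA hAB fun l =>
    (abs_of_nonneg (by have := ht0 l; positivity)).trans_le (by linarith [hsum l])
  have hbad := card_filter_anchoredTuples_not_injective_le P hB hAB
  have hsplit : #{i : Fin (m + 1) → Fin N | Function.Injective i ∧
        ∀ l, nid (x (i l.castSucc) - x (i (Fin.last m))) ≤ t l} +
      #{i ∈ anchoredTuples P | ¬ i.Injective} = #(anchoredTuples P) := by
    rw [anchoredTuples, filter_filter]
    exact card_filter_add_card_filter (fun i _ h h' => h'.2 h.1) fun i _ => by tauto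
  rw [Fintype.card_fin] at hall hbad
  calc _ = |((#(anchoredTuples P) : ℝ) - N * ∏ l, N * (2 * t l)) -
        #{i ∈ anchoredTuples P | ¬ i.Injective}| := by
        rw [← hsplit]; push_cast; ring_nf
    _ ≤ |(#(anchoredTuples P) : ℝ) - N * ∏ l, N * (2 * t l)| +
        |(#{i ∈ anchoredTuples P | ¬ i.Injective} : ℝ)| := abs_sub _ _
    _ ≤ N * (m * e * B ^ (m - 1)) + m * (m + 1) * (N * B ^ (m - 1)) := by
        rw [Nat.abs_cast]
        exact add_le_add hall hbad
    _ = m * N * B ^ (m - 1) * (e + (m + 1)) := by ring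

lemma rpow_natCast_add_one_sub_mul {y : ℝ} (hy : 0 < y) (n : ℕ) (β : ℝ) :
    y ^ ((n : ℝ) + 1 - n * β) = y * (y ^ (1 - β)) ^ n := by
  rw [show (n : ℝ) + 1 - n * β = 1 + (1 - β) * n by ring, Real.rpow_add hy, Real.rpow_one,
    Real.rpow_mul hy.le, Real.rpow_natCast]

lemma abs_Rcorr_sub_prod_le {x : ℕ → ℝ} (hx : ∀ n, x n ∈ Set.Icc (0 : ℝ) 1) {m : ℕ} (hm : 1 ≤ m)
    (β : ℝ) {s : Fin m → ℝ} (hs : ∀ l, 0 < s l) {N : ℕ} (hN : 0 < N)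
    (hsN : ∀ l, s l / (N : ℝ) ^ β < 1 / 2) :
    |Rcorr x m β s N - ∏ l, 2 * s l| ≤
      m * (∑ l, 2 * s l + 2 * ((N : ℝ) ^ β * disc x N)) ^ (m - 1) *
        (2 * ((N : ℝ) ^ β * disc x N) + (m + 1) * (N : ℝ) ^ (β - 1)) := by
  obtain ⟨k, rfl⟩ : ∃ k, m = k + 1 := ⟨m - 1, by omega⟩
  have hN' : (0 : ℝ) < N := by exact_mod_cast hN
  have hden := rpow_natCast_add_one_sub_mul hN' (k + 1) β
  -- everything is measured in units of `X = N ^ (1 - β)`, the expected size of a window count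
  set X := (N : ℝ) ^ (1 - β) with hX_def
  have hX : 0 < X := Real.rpow_pos_of_pos hN' _
  have hNβ : (N : ℝ) ^ β = N / X := by
    rw [hX_def, Real.rpow_sub hN', Real.rpow_one]; field_simp
  have hNβ1 : (N : ℝ) ^ (β - 1) = X⁻¹ := by rw [← Real.rpow_neg hN'.le, neg_sub]
  have hcount := abs_card_correlation_sub_le hx N (fun l => s l / (N : ℝ) ^ β)
    (fun l => div_nonneg (hs l).le (Real.rpow_nonneg hN'.le β)) hsN
  have hwin : ∀ l, (N : ℝ) * (2 * (s l / (N : ℝ) ^ β)) = X * (2 * s l) := fun l => by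
    rw [hNβ]; field_simp
  have hprod : ∏ l, (N : ℝ) * (2 * (s l / (N : ℝ) ^ β)) = X ^ (k + 1) * ∏ l, 2 * s l := by
    simp_rw [hwin]
    rw [prod_mul_distrib, prod_const, card_univ, Fintype.card_fin]
  have hsum : (N : ℝ) * ∑ l, 2 * (s l / (N : ℝ) ^ β) = X * ∑ l, 2 * s l := by
    rw [mul_sum, mul_sum]
    exact sum_congr rfl fun l _ => hwin l
  rw [hprod, hsum, Nat.add_sub_cancel] at hcount
  rw [Rcorr, hden]
  set c := (#{i : Fin (k + 1 + 1) → Fin N | Function.Injective i ∧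
    ∀ l, nid (x (i l.castSucc) - x (i (Fin.last (k + 1)))) ≤ s l / (N : ℝ) ^ β} : ℝ)
  have hpos : (0 : ℝ) < N * X ^ (k + 1) := by positivity
  calc |c / (N * X ^ (k + 1)) - ∏ l, 2 * s l|
      = |(c - N * (X ^ (k + 1) * ∏ l, 2 * s l)) / (N * X ^ (k + 1))| := by
        congr 1; field_simp
    _ = |c - N * (X ^ (k + 1) * ∏ l, 2 * s l)| / (N * X ^ (k + 1)) := by
        rw [abs_div, abs_of_pos hpos]
    _ ≤ ↑(k + 1) * N * (X * ∑ l, 2 * s l + 2 * (N * disc x N)) ^ k *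
          (2 * (N * disc x N) + (↑(k + 1) + 1)) / (N * X ^ (k + 1)) := by
        gcongr
    _ = _ := by
        rw [hNβ, hNβ1, Nat.add_sub_cancel, show ∑ l, 2 * s l + 2 * (N / X * disc x N) =
          (X * ∑ l, 2 * s l + 2 * (N * disc x N)) / X by field_simp, div_pow]
        field_simp
        ring

lemma tendsto_rpow_mul_of_isLittleO_rpow_neg {f : ℕ → ℝ} {β γ : ℝ}
    (hf : f =o[atTop] fun N : ℕ => (N : ℝ) ^ (-γ)) (hβγ : β ≤ γ) :
    Tendsto (fun N : ℕ => (N : ℝ) ^ β * f N) atTop (𝓝 0) := by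
  have hbdd : (fun N : ℕ => (N : ℝ) ^ β * (N : ℝ) ^ (-γ)) =O[atTop] fun _ => (1 : ℝ) := by
    refine IsBigO.of_bound 1 ?_
    filter_upwards [eventually_ge_atTop 1] with N hN
    have hN' : (1 : ℝ) ≤ N := by exact_mod_cast hN
    rw [← Real.rpow_add (by linarith), norm_one, one_mul,
      Real.norm_of_nonneg (Real.rpow_nonneg (by linarith) _)]
    exact Real.rpow_le_one_of_one_le_of_nonpos hN' (by linarith)
  exact (isLittleO_one_iff ℝ).1 (((isBigO_refl _ _).mul_isLittleO hf).trans_isBigO hbdd)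

theorem stmt8_general (x : ℕ → ℝ) (hx : ∀ n, x n ∈ Set.Icc (0 : ℝ) 1)
    (ε : ℝ) (hε : 0 < ε)
    (hD : (fun N : ℕ => disc x N) =o[atTop] fun N : ℕ => (N : ℝ) ^ (-(1 - ε)))
    (m : ℕ) (hm : 1 ≤ m) (β : ℝ) (hβ : 0 < β) (hβε : β ≤ 1 - ε)
    (s : Fin m → ℝ) (hs : ∀ i, 0 < s i) :
    Tendsto (fun N => Rcorr x m β s N) atTop (nhds (∏ i, 2 * s i)) := by
  have hpow : Tendsto (fun N : ℕ => (N : ℝ) ^ β) atTop atTop :=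
    (tendsto_rpow_atTop hβ).comp tendsto_natCast_atTop_atTop
  have hdisc := tendsto_rpow_mul_of_isLittleO_rpow_neg hD hβε
  have hgap : Tendsto (fun N : ℕ => (N : ℝ) ^ (β - 1)) atTop (𝓝 0) := by
    simpa [Function.comp_def, neg_sub] using
      (tendsto_rpow_neg_atTop (y := 1 - β) (by linarith)).comp tendsto_natCast_atTop_atTop
  have hwindow : ∀ᶠ N : ℕ in atTop, ∀ l, s l / (N : ℝ) ^ β < 1 / 2 :=
    eventually_all.2 fun l =>
      (tendsto_const_nhds.div_atTop hpow).eventually_lt_const (by norm_num)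
  have hbound : Tendsto (fun N : ℕ =>
      m * (∑ l, 2 * s l + 2 * ((N : ℝ) ^ β * disc x N)) ^ (m - 1) *
        (2 * ((N : ℝ) ^ β * disc x N) + (m + 1) * (N : ℝ) ^ (β - 1))) atTop (𝓝 0) := by
    simpa using ((((hdisc.const_mul 2).const_add _).pow (m - 1)).const_mul (m : ℝ)).mul
      ((hdisc.const_mul 2).add (hgap.const_mul _))
  refine tendsto_iff_norm_sub_tendsto_zero.2 (squeeze_zero_norm' ?_ hbound)
  filter_upwards [eventually_gt_atTop 0, hwindow] with N hN hsN
  rw [norm_norm, Real.norm_eq_abs]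
  exact abs_Rcorr_sub_prod_le hx hm β hs hN hsN

/-- if `D_N(x) = o(N^{-(1-ε)})` for some `0 < ε < 1`, then for every `k ≥ 2` and
every `β` with `0 < β ≤ 1 - ε` the sequence has `(k,β)`-Poissonian box correlations. -/
theorem stmt8 (x : ℕ → ℝ) (hx : ∀ n, x n ∈ Set.Icc (0 : ℝ) 1)
    (ε : ℝ) (hε : 0 < ε) (hε1 : ε < 1)
    (hD : (fun N : ℕ => disc x N) =o[atTop] fun N : ℕ => (N : ℝ) ^ (-(1 - ε)))
    (m : ℕ) (hm : 1 ≤ m) (β : ℝ) (hβ : 0 < β) (hβε : β ≤ 1 - ε)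
    (s : Fin m → ℝ) (hs : ∀ i, 0 < s i) :
    Tendsto (fun N => Rcorr x m β s N) atTop (nhds (∏ i, 2 * s i)) :=
  stmt8_general x hx ε hε hD m hm β hβ hβε s hs
end
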